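/- arXiv:math/0210164 — 4 statements merged into one kernel-verified Lean document; each statement's English description precedes it below -/
import Mathlib

section
/- For every real Λ ≥ 0, the double integral of the function (r, t) ↦ cosh²(r) · cosh(t) over the region {(r, t) ∈ ℝ × [0, ∞) : cosh(r) · cosh(t) ≤ cosh(Λ)} equals (π/2) · sinh²(Λ). -/
open Real MeasureTheory Set

lemma halfdisk_volume (R : ℝ) (hR : 0 ≤ R) :
    volume {q : ℝ × ℝ | 0 ≤ q.2 ∧ q.1 ^ 2 + q.2 ^ 2 ≤ R ^ 2} =
      ENNReal.ofReal (π / 2 * R ^ 2) := by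
  set D : Set (ℝ × ℝ) := {q : ℝ × ℝ | 0 ≤ q.2 ∧ q.1 ^ 2 + q.2 ^ 2 ≤ R ^ 2} with hDdef
  have hDclosed : IsClosed D := by
    exact (isClosed_le continuous_const continuous_snd).inter
      (isClosed_le ((continuous_fst.pow 2).add (continuous_snd.pow 2)) continuous_const)
  have hD : MeasurableSet D := hDclosed.measurableSet
  have hslice : ∀ u : ℝ, volume (Prod.mk u ⁻¹' D) = ENNReal.ofReal (√(R ^ 2 - u ^ 2)) := by
    intro u
    rcases le_or_gt 0 (R ^ 2 - u ^ 2) with hc | hc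
    · have : Prod.mk u ⁻¹' D = Icc 0 (√(R ^ 2 - u ^ 2)) := by
        ext v
        simp only [hDdef, mem_preimage, mem_setOf_eq, mem_Icc]
        constructor
        · rintro ⟨hv, hle⟩
          refine ⟨hv, ?_⟩
          have : v = √(v ^ 2) := (Real.sqrt_sq hv).symm
          rw [this]
          exact Real.sqrt_le_sqrt (by linarith)
        · rintro ⟨hv, hle⟩
          refine ⟨hv, ?_⟩
          have := Real.sq_sqrt hc
          nlinarith [Real.sqrt_nonneg (R ^ 2 - u ^ 2)]
      rw [this, Real.volume_Icc, sub_zero]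
    · have h0 : Prod.mk u ⁻¹' D = ∅ := by
        ext v
        simp only [hDdef, mem_preimage, mem_setOf_eq, mem_empty_iff_false, iff_false, not_and,
          not_le]
        intro hv
        nlinarith [sq_nonneg v]
      rw [h0, measure_empty, Real.sqrt_eq_zero_of_nonpos hc.le, ENNReal.ofReal_zero]
  have hgcont : Continuous fun u : ℝ => √(R ^ 2 - u ^ 2) := by fun_prop
  have hgsupp : HasCompactSupport fun u : ℝ => √(R ^ 2 - u ^ 2) := by
    apply HasCompactSupport.intro (isCompact_Icc (a := -R) (b := R))
    intro u hu
    apply Real.sqrt_eq_zero_of_nonpos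
    simp only [mem_Icc, not_and, not_le] at hu
    rcases le_or_gt (-R) u with h1 | h1
    · nlinarith [hu h1]
    · nlinarith
  have hgint : Integrable fun u : ℝ => √(R ^ 2 - u ^ 2) :=
    hgcont.integrable_of_hasCompactSupport hgsupp
  have key : (∫ u : ℝ, √(R ^ 2 - u ^ 2)) = π / 2 * R ^ 2 := by
    have h1 : (∫ u : ℝ, √(R ^ 2 - u ^ 2)) = ∫ u in Icc (-R) R, √(R ^ 2 - u ^ 2) := by
      symm
      apply setIntegral_eq_integral_of_forall_compl_eq_zero
      intro u hu
      apply Real.sqrt_eq_zero_of_nonpos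
      simp only [mem_Icc, not_and, not_le] at hu
      rcases le_or_gt (-R) u with h2 | h2
      · nlinarith [hu h2]
      · nlinarith
    rw [h1, MeasureTheory.integral_Icc_eq_integral_Ioc,
      ← intervalIntegral.integral_of_le (by linarith : -R ≤ R)]
    rcases eq_or_lt_of_le hR with hR0 | hR0
    · rw [← hR0]
      simp
    · have hsub := intervalIntegral.integral_comp_mul_left
        (f := fun u : ℝ => √(R ^ 2 - u ^ 2)) (a := -1) (b := 1) (c := R) hR0.ne'
      have hval : ∀ x : ℝ, √(R ^ 2 - (R * x) ^ 2) = R * √(1 - x ^ 2) := by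
        intro x
        have : R ^ 2 - (R * x) ^ 2 = R ^ 2 * (1 - x ^ 2) := by ring
        rw [this, Real.sqrt_mul (sq_nonneg R), Real.sqrt_sq hR]
      simp only [hval] at hsub
      rw [intervalIntegral.integral_const_mul, integral_sqrt_one_sub_sq] at hsub
      have := hsub.symm
      rw [mul_neg_one, mul_one, smul_eq_mul] at this
      have hR' : R ≠ 0 := hR0.ne'
      field_simp at this
      linear_combination this / 2
  rw [Measure.volume_eq_prod, Measure.prod_apply hD]
  simp only [hslice]
  rw [← ofReal_integral_eq_lintegral_ofReal hgint
    (Filter.Eventually.of_forall fun u => Real.sqrt_nonneg _), key]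

open Real MeasureTheory

/-- The integral of `cosh²r · cosh t` over the region
`{(r,t) : t ≥ 0, cosh r · cosh t ≤ cosh Λ}` equals `(π/2) sinh²Λ`. -/
theorem stmt_5 (Λ : ℝ) (hΛ : 0 ≤ Λ) :
    ∫ p in {p : ℝ × ℝ | 0 ≤ p.2 ∧ Real.cosh p.1 * Real.cosh p.2 ≤ Real.cosh Λ},
        Real.cosh p.1 ^ 2 * Real.cosh p.2 =
      (π / 2) * Real.sinh Λ ^ 2 := by
  set R := Real.sinh Λ with hRdef
  have hR : 0 ≤ R := Real.sinh_nonneg_iff.mpr hΛ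
  set s : Set (ℝ × ℝ) :=
    {p : ℝ × ℝ | 0 ≤ p.2 ∧ Real.cosh p.1 * Real.cosh p.2 ≤ Real.cosh Λ} with hsdef
  set f : ℝ × ℝ → ℝ × ℝ := fun p => (Real.sinh p.1, Real.cosh p.1 * Real.sinh p.2) with hfdef
  set B : ℝ × ℝ → ℝ × ℝ →L[ℝ] ℝ × ℝ := fun p =>
    LinearMap.toContinuousLinearMap (Matrix.toLin (Module.Basis.finTwoProd ℝ) (Module.Basis.finTwoProd ℝ)
      !![Real.cosh p.1, 0; Real.sinh p.1 * Real.sinh p.2, Real.cosh p.1 * Real.cosh p.2])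
    with hBdef
  have hs : MeasurableSet s :=
    ((isClosed_le continuous_const continuous_snd).inter
      (isClosed_le ((Real.continuous_cosh.comp continuous_fst).mul
        (Real.continuous_cosh.comp continuous_snd)) continuous_const)).measurableSet
  have hfderiv : ∀ p : ℝ × ℝ, HasFDerivAt f (B p) p := by
    intro p
    rw [hBdef]
    dsimp only
    rw [Matrix.toLin_finTwoProd_toContinuousLinearMap]
    convert HasFDerivAt.prodMk (𝕜 := ℝ)
      ((Real.hasDerivAt_sinh p.1).comp_hasFDerivAt p hasFDerivAt_fst)
      (((Real.hasDerivAt_cosh p.1).comp_hasFDerivAt p hasFDerivAt_fst).mul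
        ((Real.hasDerivAt_sinh p.2).comp_hasFDerivAt p hasFDerivAt_snd)) using 2 <;>
    first | rfl | simp [smul_smul, add_comm, mul_comm]
  have hBdet : ∀ p : ℝ × ℝ, (B p).det = Real.cosh p.1 ^ 2 * Real.cosh p.2 := by
    intro p
    simp only [hBdef, LinearMap.det_toContinuousLinearMap, LinearMap.det_toLin,
      Matrix.det_fin_two_of]
    ring
  have hinj : Set.InjOn f s := by
    intro p _ q _ h
    have h1 : Real.sinh p.1 = Real.sinh q.1 := congrArg Prod.fst h
    have h1' : p.1 = q.1 := Real.sinh_injective h1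
    have h2 : Real.cosh p.1 * Real.sinh p.2 = Real.cosh q.1 * Real.sinh q.2 :=
      congrArg Prod.snd h
    rw [h1'] at h2
    have h2' : Real.sinh p.2 = Real.sinh q.2 :=
      mul_left_cancel₀ (Real.cosh_pos (x := q.1)).ne' h2
    exact Prod.ext h1' (Real.sinh_injective h2')
  have himg : f '' s = {q : ℝ × ℝ | 0 ≤ q.2 ∧ q.1 ^ 2 + q.2 ^ 2 ≤ R ^ 2} := by
    ext q
    constructor
    · rintro ⟨p, ⟨hp1, hp2⟩, rfl⟩
      constructor
      · exact mul_nonneg (Real.cosh_pos (x := p.1)).le (Real.sinh_nonneg_iff.mpr hp1)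
      · have hc1 := Real.cosh_pos (x := p.1)
        have hc2 := Real.cosh_pos (x := p.2)
        have hcΛ := Real.cosh_pos (x := Λ)
        have e1 := Real.cosh_sq p.1
        have e2 := Real.cosh_sq p.2
        have e3 := Real.cosh_sq Λ
        simp only [hfdef]
        nlinarith [mul_nonneg (sub_nonneg.mpr hp2)
          (by positivity : (0:ℝ) ≤ Real.cosh Λ + Real.cosh p.1 * Real.cosh p.2)]
    · rintro ⟨hq2, hq⟩
      have h1 : (0:ℝ) < 1 + q.1 ^ 2 := by positivity
      have hsq : √(1 + q.1 ^ 2) ≠ 0 := by positivity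
      refine ⟨(Real.arsinh q.1, Real.arsinh (q.2 / √(1 + q.1 ^ 2))), ⟨?_, ?_⟩, ?_⟩
      · exact Real.arsinh_nonneg_iff.mpr (div_nonneg hq2 (Real.sqrt_nonneg _))
      · show Real.cosh (Real.arsinh q.1) *
            Real.cosh (Real.arsinh (q.2 / √(1 + q.1 ^ 2))) ≤ Real.cosh Λ
        rw [Real.cosh_arsinh, Real.cosh_arsinh]
        have hd : (q.2 / √(1 + q.1 ^ 2)) ^ 2 = q.2 ^ 2 / (1 + q.1 ^ 2) := by
          rw [div_pow, Real.sq_sqrt h1.le]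
        rw [hd, ← Real.sqrt_mul h1.le]
        have hrad : (1 + q.1 ^ 2) * (1 + q.2 ^ 2 / (1 + q.1 ^ 2)) =
            1 + q.1 ^ 2 + q.2 ^ 2 := by
          field_simp
        rw [hrad]
        have hcΛ : Real.cosh Λ = √(1 + R ^ 2) := by
          rw [← Real.sqrt_sq (Real.cosh_pos (x := Λ)).le, Real.cosh_sq]
          congr 1
          ring
        rw [hcΛ]
        apply Real.sqrt_le_sqrt
        linarith
      · show (Real.sinh (Real.arsinh q.1),
            Real.cosh (Real.arsinh q.1) * Real.sinh (Real.arsinh (q.2 / √(1 + q.1 ^ 2)))) = q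
        rw [Real.sinh_arsinh, Real.sinh_arsinh, Real.cosh_arsinh,
          mul_div_cancel₀ _ hsq]
  have hstep : ∫ x in f '' s, (1:ℝ) = ∫ x in s, |(B x).det| • (1:ℝ) :=
    integral_image_eq_integral_abs_det_fderiv_smul volume hs
      (fun x _ => (hfderiv x).hasFDerivWithinAt) hinj _
  calc ∫ p in s, Real.cosh p.1 ^ 2 * Real.cosh p.2
      = ∫ x in s, |(B x).det| • (1:ℝ) := by
        apply setIntegral_congr_fun hs
        intro p _
        dsimp only
        rw [hBdet, smul_eq_mul, mul_one, abs_of_pos]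
        positivity
    _ = ∫ x in f '' s, (1:ℝ) := hstep.symm
    _ = (volume {q : ℝ × ℝ | 0 ≤ q.2 ∧ q.1 ^ 2 + q.2 ^ 2 ≤ R ^ 2}).toReal := by
        rw [himg, setIntegral_const, smul_eq_mul, mul_one, measureReal_def]
    _ = (π / 2) * R ^ 2 := by
        rw [halfdisk_volume R hR, ENNReal.toReal_ofReal (by positivity)]
end

section
/- Let λ > 0 and let r, t : ℝ → ℝ be functions differentiable at a point s, with cosh(r(σ)) · cosh(t(σ)) = cosh(λ) for all σ in a neighborhood of s, and suppose cosh(r(s)) < cosh(λ) and t(s) > 0. Then r'(s)² + cosh²(r(s)) · t'(s)² = r'(s)² · cosh²(r(s)) · sinh²(λ) / (cosh²(λ) − cosh²(r(s))). -/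
/-!
Differentiating `cosh r · cosh t = cosh λ` gives `cosh r · sinh t · t' = -sinh r · cosh t · r'`.
Squaring and multiplying by `cosh² r` turns `cosh² r · sinh² t` into `cosh² λ - cosh² r` and
`cosh² r · cosh² t` into `cosh² λ`, so `cosh² r · t'² = sinh² r · cosh² λ · r'² / (cosh² λ - cosh² r)`;
adding `r'²` and using `cosh² - sinh² = 1` gives the formula.
-/

open Real

theorem hasDerivAt_cosh_comp_mul_cosh_comp {f g : ℝ → ℝ} {s : ℝ}
    (hf : DifferentiableAt ℝ f s) (hg : DifferentiableAt ℝ g s) :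
    HasDerivAt (fun σ => cosh (f σ) * cosh (g σ))
      (sinh (f s) * deriv f s * cosh (g s) + cosh (f s) * (sinh (g s) * deriv g s)) s :=
  ((hasDerivAt_cosh (f s)).comp s hf.hasDerivAt).mul
    ((hasDerivAt_cosh (g s)).comp s hg.hasDerivAt)

theorem deriv_cosh_comp_mul_cosh_comp_eq_zero {f g : ℝ → ℝ} {s c : ℝ}
    (hf : DifferentiableAt ℝ f s) (hg : DifferentiableAt ℝ g s)
    (hconst : ∀ᶠ σ in nhds s, cosh (f σ) * cosh (g σ) = c) :
    sinh (f s) * deriv f s * cosh (g s) + cosh (f s) * (sinh (g s) * deriv g s) = 0 :=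
  (hasDerivAt_cosh_comp_mul_cosh_comp hf hg).unique
    ((hasDerivAt_const s c).congr_of_eventuallyEq hconst)

theorem cosh_sq_mul_sq_mul_eq_of_tangent {a b l x y : ℝ} (hab : cosh a * cosh b = cosh l)
    (htan : sinh a * x * cosh b + cosh a * (sinh b * y) = 0) :
    cosh a ^ 2 * y ^ 2 * (cosh l ^ 2 - cosh a ^ 2) = sinh a ^ 2 * cosh l ^ 2 * x ^ 2 := by
  have hsq : (cosh a * sinh b * y) ^ 2 = (sinh a * cosh b * x) ^ 2 := by
    rw [show cosh a * sinh b * y = -(sinh a * cosh b * x) by linear_combination htan, neg_sq]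
  rw [← hab]
  linear_combination cosh a ^ 2 * hsq + cosh a ^ 4 * y ^ 2 * cosh_sq b

theorem sq_add_cosh_sq_mul_sq_of_tangent {a b l x y : ℝ} (hab : cosh a * cosh b = cosh l)
    (hal : cosh a < cosh l) (htan : sinh a * x * cosh b + cosh a * (sinh b * y) = 0) :
    x ^ 2 + cosh a ^ 2 * y ^ 2 =
      x ^ 2 * cosh a ^ 2 * sinh l ^ 2 / (cosh l ^ 2 - cosh a ^ 2) := by
  have hgap : 0 < cosh l ^ 2 - cosh a ^ 2 := by nlinarith [cosh_pos a]
  rw [eq_div_iff hgap.ne']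
  linear_combination cosh_sq_mul_sq_mul_eq_of_tangent hab htan
    + x ^ 2 * cosh a ^ 2 * cosh_sq l - x ^ 2 * cosh l ^ 2 * cosh_sq a

theorem stmt_6_general (lam : ℝ) (r t : ℝ → ℝ) (s : ℝ)
    (hr : DifferentiableAt ℝ r s) (ht : DifferentiableAt ℝ t s)
    (hconstr : ∀ᶠ σ in nhds s, Real.cosh (r σ) * Real.cosh (t σ) = Real.cosh lam)
    (hrs : Real.cosh (r s) < Real.cosh lam) :
    deriv r s ^ 2 + Real.cosh (r s) ^ 2 * deriv t s ^ 2 =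
      deriv r s ^ 2 * Real.cosh (r s) ^ 2 * Real.sinh lam ^ 2 /
        (Real.cosh lam ^ 2 - Real.cosh (r s) ^ 2) :=
  sq_add_cosh_sq_mul_sq_of_tangent hconstr.self_of_nhds hrs
    (deriv_cosh_comp_mul_cosh_comp_eq_zero hr ht hconstr)

/-- Along the constraint `cosh r · cosh t = cosh λ` (with `cosh r < cosh λ` and `t > 0`),
one has `r'² + cosh²(r) t'² = r'² cosh²(r) sinh²(λ) / (cosh²λ − cosh²r)`. -/
theorem stmt_6 (lam : ℝ) (hlam : 0 < lam) (r t : ℝ → ℝ) (s : ℝ)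
    (hr : DifferentiableAt ℝ r s) (ht : DifferentiableAt ℝ t s)
    (hconstr : ∀ᶠ σ in nhds s, Real.cosh (r σ) * Real.cosh (t σ) = Real.cosh lam)
    (hrs : Real.cosh (r s) < Real.cosh lam) (hts : 0 < t s) :
    deriv r s ^ 2 + Real.cosh (r s) ^ 2 * deriv t s ^ 2 =
      deriv r s ^ 2 * Real.cosh (r s) ^ 2 * Real.sinh lam ^ 2 /
        (Real.cosh lam ^ 2 - Real.cosh (r s) ^ 2) :=
  stmt_6_general lam r t s hr ht hconstr hrs
end

section
/- Let λ > 0. Define r, t : ℝ → ℝ by r(φ) = arsinh(sinh(λ) · sin(φ)) and t(φ) = arcosh(cosh(λ) / cosh(r(φ))). Then for every φ ∈ (−π/2, π/2): (i) cosh(r(φ)) · cosh(t(φ)) = cosh(λ) and t(φ) ≥ 0; and (ii) r and t are differentiable at φ with r'(φ)² + cosh²(r(φ)) · t'(φ)² = sinh²(λ). -/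
open Real

/-- The inverse hyperbolic cosine. -/
noncomputable def arcosh (x : ℝ) : ℝ := Real.log (x + Real.sqrt (x ^ 2 - 1))

/-- `r(φ) = arsinh(sinh λ · sin φ)`. -/
noncomputable def rCoord (lam φ : ℝ) : ℝ := Real.arsinh (Real.sinh lam * Real.sin φ)

/-- `t(φ) = arcosh(cosh λ / cosh r(φ))`. -/
noncomputable def tCoord (lam φ : ℝ) : ℝ := _root_.arcosh (Real.cosh lam / Real.cosh (rCoord lam φ))

/-!
Everything rests on the identity `cosh² λ - cosh² r = (sinh λ cos φ)²`, which gives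
`cosh r ≤ cosh λ` (so `t` is well defined and `cosh r · cosh t = cosh λ`) and
`sinh t = sinh λ cos φ / cosh r`. Differentiating then yields `r' = sinh λ cos φ / cosh r` and
`t' = -cosh λ sinh λ sin φ / cosh² r`, and `r'² + cosh² r · t'² = sinh² λ` is algebra in the
same identity.
-/

theorem arcosh_eq_real_arcosh : _root_.arcosh = Real.arcosh := rfl

section Coordinates

variable (lam φ : ℝ)

theorem sinh_rCoord : sinh (rCoord lam φ) = sinh lam * sin φ := sinh_arsinh _

theorem cosh_sq_sub_cosh_rCoord_sq :
    cosh lam ^ 2 - cosh (rCoord lam φ) ^ 2 = (sinh lam * cos φ) ^ 2 := by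
  rw [cosh_sq', cosh_sq', sinh_rCoord]
  linear_combination -sinh lam ^ 2 * sin_sq_add_cos_sq φ

theorem cosh_rCoord_le : cosh (rCoord lam φ) ≤ cosh lam := by
  refine (pow_le_pow_iff_left₀ (cosh_pos _).le (cosh_pos _).le two_ne_zero).1 ?_
  linarith [cosh_sq_sub_cosh_rCoord_sq lam φ, sq_nonneg (sinh lam * cos φ)]

theorem one_le_cosh_div_cosh_rCoord : 1 ≤ cosh lam / cosh (rCoord lam φ) :=
  (one_le_div (cosh_pos _)).2 (cosh_rCoord_le lam φ)

theorem one_lt_cosh_div_cosh_rCoord (h : sinh lam * cos φ ≠ 0) :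
    1 < cosh lam / cosh (rCoord lam φ) := by
  refine (one_lt_div (cosh_pos _)).2 <|
    (pow_lt_pow_iff_left₀ (cosh_pos _).le (cosh_pos _).le two_ne_zero).1 ?_
  linarith [cosh_sq_sub_cosh_rCoord_sq lam φ, sq_pos_of_ne_zero h]

theorem cosh_rCoord_mul_cosh_tCoord : cosh (rCoord lam φ) * cosh (tCoord lam φ) = cosh lam := by
  rw [tCoord, arcosh_eq_real_arcosh, cosh_arcosh (one_le_cosh_div_cosh_rCoord lam φ)]
  exact mul_div_cancel₀ _ (cosh_pos _).ne'

theorem tCoord_nonneg : 0 ≤ tCoord lam φ := by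
  rw [tCoord, arcosh_eq_real_arcosh]
  exact arcosh_nonneg (one_le_cosh_div_cosh_rCoord lam φ)

theorem sqrt_sq_cosh_div_cosh_rCoord_sub_one :
    √((cosh lam / cosh (rCoord lam φ)) ^ 2 - 1) = |sinh lam * cos φ| / cosh (rCoord lam φ) := by
  have hC := (cosh_pos (rCoord lam φ)).ne'
  have h : (cosh lam / cosh (rCoord lam φ)) ^ 2 - 1 = (sinh lam * cos φ / cosh (rCoord lam φ)) ^ 2 := by
    field_simp
    linear_combination cosh_sq_sub_cosh_rCoord_sq lam φ
  rw [h, sqrt_sq_eq_abs, abs_div, abs_of_pos (cosh_pos _)]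

theorem hasDerivAt_rCoord :
    HasDerivAt (rCoord lam) (sinh lam * cos φ / cosh (rCoord lam φ)) φ := by
  have h := (hasDerivAt_arsinh (sinh lam * sin φ)).comp φ ((hasDerivAt_sin φ).const_mul (sinh lam))
  rw [← cosh_arsinh] at h
  exact h.congr_deriv (div_eq_inv_mul _ _).symm

theorem hasDerivAt_tCoord (h : 0 < sinh lam * cos φ) :
    HasDerivAt (tCoord lam) (-(cosh lam * sinh lam * sin φ) / cosh (rCoord lam φ) ^ 2) φ := by
  have hC := cosh_pos (rCoord lam φ)
  have hcosh : HasDerivAt (fun y => cosh (rCoord lam y))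
      (sinh lam * sin φ * (sinh lam * cos φ / cosh (rCoord lam φ))) φ :=
    ((hasDerivAt_cosh _).comp φ (hasDerivAt_rCoord lam φ)).congr_deriv (by rw [sinh_rCoord])
  have hquot := (hasDerivAt_const φ (cosh lam)).div hcosh hC.ne'
  have harcosh := hasDerivAt_arcosh (one_lt_cosh_div_cosh_rCoord lam φ h.ne')
  rw [sqrt_sq_cosh_div_cosh_rCoord_sub_one, abs_of_pos h] at harcosh
  refine (harcosh.comp φ hquot).congr_deriv ?_
  have hs := left_ne_zero_of_mul h.ne'
  have hc := right_ne_zero_of_mul h.ne'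
  field_simp
  ring

theorem deriv_rCoord_sq_add_cosh_rCoord_sq_mul_deriv_tCoord_sq (h : 0 < sinh lam * cos φ) :
    deriv (rCoord lam) φ ^ 2 + cosh (rCoord lam φ) ^ 2 * deriv (tCoord lam) φ ^ 2 =
      sinh lam ^ 2 := by
  rw [(hasDerivAt_rCoord lam φ).deriv, (hasDerivAt_tCoord lam φ h).deriv]
  have hC := (cosh_pos (rCoord lam φ)).ne'
  field_simp
  linear_combination sinh lam ^ 2 * cosh_sq_sub_cosh_rCoord_sq lam φ +
    sinh lam ^ 2 * cosh lam ^ 2 * sin_sq_add_cos_sq φ - sinh lam ^ 2 * cos φ ^ 2 * cosh_sq' lam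

end Coordinates

/-- The parametrization `φ ↦ (r(φ), t(φ))` of the curve `cosh r · cosh t = cosh λ`
satisfies `r'² + cosh²(r) t'² = sinh²λ`:
the equidistant surface is a flat cylinder. -/
theorem stmt_7 (lam : ℝ) (hlam : 0 < lam) :
    ∀ φ ∈ Set.Ioo (-(π / 2)) (π / 2),
      (Real.cosh (rCoord lam φ) * Real.cosh (tCoord lam φ) = Real.cosh lam ∧
        0 ≤ tCoord lam φ) ∧
      DifferentiableAt ℝ (rCoord lam) φ ∧ DifferentiableAt ℝ (tCoord lam) φ ∧
      deriv (rCoord lam) φ ^ 2 + Real.cosh (rCoord lam φ) ^ 2 * deriv (tCoord lam) φ ^ 2 =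
        Real.sinh lam ^ 2 := by
  intro φ hφ
  have h : 0 < sinh lam * cos φ := mul_pos (sinh_pos_iff.2 hlam) (cos_pos_of_mem_Ioo hφ)
  exact ⟨⟨cosh_rCoord_mul_cosh_tCoord lam φ, tCoord_nonneg lam φ⟩,
    (hasDerivAt_rCoord lam φ).differentiableAt, (hasDerivAt_tCoord lam φ h).differentiableAt,
    deriv_rCoord_sq_add_cosh_rCoord_sq_mul_deriv_tCoord_sq lam φ h⟩
end

section
/- Let A > 0 and L ≥ 0 be real numbers. For ε ∈ (0, 1) set Λ(ε) = −log ε and define V(ε) = A · ∫_{−Λ(ε)}^{Λ(ε)} cosh²(r) dr + L · (the double integral of (r, t) ↦ cosh²(r)·cosh(t) over {(r, t) ∈ ℝ × [0, ∞) : cosh(r)·cosh(t) ≤ cosh(Λ(ε))}). Then lim_{ε → 0⁺} [ V(ε) − (A/4 + πL/8)·ε^{−2} + A·log ε ] = −(π/4)·L. -/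
open Real MeasureTheory Filter

private lemma my_integral_cosh (a b : ℝ) :
    ∫ x in a..b, Real.cosh x = Real.sinh b - Real.sinh a := by
  apply intervalIntegral.integral_eq_sub_of_hasDerivAt
  · intro x _; exact Real.hasDerivAt_sinh x
  · exact Real.continuous_cosh.intervalIntegrable a b

private lemma integral_cosh_sq (Λ : ℝ) :
    ∫ r in (-Λ)..Λ, Real.cosh r ^ 2 = Λ + Real.sinh Λ * Real.cosh Λ := by
  have h : ∀ x ∈ Set.uIcc (-Λ) Λ,
      HasDerivAt (fun r => (r + Real.sinh r * Real.cosh r) / 2) (Real.cosh x ^ 2) x := by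
    intro x _
    have h1 := ((hasDerivAt_id x).add
      ((Real.hasDerivAt_sinh x).mul (Real.hasDerivAt_cosh x))).div_const 2
    convert h1 using 1
    have := Real.cosh_sq x
    show Real.cosh x ^ 2 = (1 + (Real.cosh x * Real.cosh x + Real.sinh x * Real.sinh x)) / 2
    nlinarith [Real.cosh_sq x]
    all_goals rfl
  rw [intervalIntegral.integral_eq_sub_of_hasDerivAt h
    ((Real.continuous_cosh.pow 2).intervalIntegrable _ _)]
  simp [Real.sinh_neg, Real.cosh_neg]
  ring

private lemma semicircle (s : ℝ) (hs : 0 ≤ s) :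
    ∫ u in (-s)..s, Real.sqrt (s ^ 2 - u ^ 2) = π * s ^ 2 / 2 := by
  have h := intervalIntegral.smul_integral_comp_mul_left
    (fun u => Real.sqrt (s ^ 2 - u ^ 2)) s (a := -1) (b := 1)
  have h2 : (fun v : ℝ => Real.sqrt (s ^ 2 - (s * v) ^ 2))
      = fun v : ℝ => s * Real.sqrt (1 - v ^ 2) := by
    funext v
    rw [show s ^ 2 - (s * v) ^ 2 = s ^ 2 * (1 - v ^ 2) by ring,
      Real.sqrt_mul (sq_nonneg s), Real.sqrt_sq hs]
  rw [show s * (-1 : ℝ) = -s by ring, mul_one] at h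
  rw [← h]
  simp only [h2]
  rw [intervalIntegral.integral_const_mul, integral_sqrt_one_sub_sq]
  simp [smul_eq_mul]; ring

private lemma key_double (Λ : ℝ) (hΛ : 0 ≤ Λ) :
    (∫ p in {p : ℝ × ℝ | 0 ≤ p.2 ∧
        Real.cosh p.1 * Real.cosh p.2 ≤ Real.cosh Λ},
      Real.cosh p.1 ^ 2 * Real.cosh p.2) = π * Real.sinh Λ ^ 2 / 2 := by
  set S : Set (ℝ × ℝ) := {p : ℝ × ℝ | 0 ≤ p.2 ∧
      Real.cosh p.1 * Real.cosh p.2 ≤ Real.cosh Λ} with hS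
  set f : ℝ × ℝ → ℝ := fun p => Real.cosh p.1 ^ 2 * Real.cosh p.2 with hf
  have hfc : Continuous f :=
    ((Real.continuous_cosh.comp continuous_fst).pow 2).mul
      (Real.continuous_cosh.comp continuous_snd)
  have hclosed : IsClosed S := by
    have : S = {p : ℝ × ℝ | 0 ≤ p.2} ∩
        {p : ℝ × ℝ | Real.cosh p.1 * Real.cosh p.2 ≤ Real.cosh Λ} := rfl
    rw [this]
    exact (isClosed_le continuous_const continuous_snd).inter
      (isClosed_le ((Real.continuous_cosh.comp continuous_fst).mul
        (Real.continuous_cosh.comp continuous_snd)) continuous_const)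
  have hsub : S ⊆ Set.Icc (-Λ) Λ ×ˢ Set.Icc (-Λ) Λ := by
    rintro ⟨x, y⟩ ⟨hy, hxy⟩
    have hx1 : Real.cosh x ≤ Real.cosh Λ := by
      nlinarith [Real.one_le_cosh y, Real.cosh_pos x]
    have hy1 : Real.cosh y ≤ Real.cosh Λ := by
      nlinarith [Real.one_le_cosh x, Real.cosh_pos y]
    have hx2 : |x| ≤ Λ := by
      have := Real.cosh_le_cosh.mp hx1
      rwa [abs_of_nonneg hΛ] at this
    have hy2 : |y| ≤ Λ := by
      have := Real.cosh_le_cosh.mp hy1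
      rwa [abs_of_nonneg hΛ] at this
    exact ⟨abs_le.mp hx2, abs_le.mp hy2⟩
  have hcomp : IsCompact S :=
    IsCompact.of_isClosed_subset (isCompact_Icc.prod isCompact_Icc) hclosed hsub
  have hmeas : MeasurableSet S := hclosed.measurableSet
  have hIntOn : IntegrableOn f S volume :=
    ContinuousOn.integrableOn_compact hcomp hfc.continuousOn
  have hInd : Integrable (S.indicator f) (volume.prod volume) := by
    rw [← Measure.volume_eq_prod]
    exact (integrable_indicator_iff hmeas).mpr hIntOn
  rw [← MeasureTheory.integral_indicator hmeas, Measure.volume_eq_prod,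
    MeasureTheory.integral_prod _ hInd]
  have inner : ∀ x : ℝ, (∫ y : ℝ, S.indicator f (x, y))
      = Real.cosh x * Real.sqrt (Real.cosh Λ ^ 2 - Real.cosh x ^ 2) := by
    intro x
    set T : Set ℝ := {y : ℝ | 0 ≤ y ∧ Real.cosh x * Real.cosh y ≤ Real.cosh Λ} with hT
    have hindT : (fun y : ℝ => S.indicator f (x, y))
        = T.indicator (fun y => Real.cosh x ^ 2 * Real.cosh y) := by
      funext y
      by_cases h : 0 ≤ y ∧ Real.cosh x * Real.cosh y ≤ Real.cosh Λ
      · rw [Set.indicator_of_mem (by exact h : (x, y) ∈ S),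
          Set.indicator_of_mem (by exact h : y ∈ T)]
      · rw [Set.indicator_of_notMem (by exact h : (x, y) ∉ S),
          Set.indicator_of_notMem (by exact h : y ∉ T)]
    have hTmeas : MeasurableSet T := by
      have : IsClosed T := (isClosed_le continuous_const continuous_id).inter
        (isClosed_le (continuous_const.mul Real.continuous_cosh) continuous_const)
      exact this.measurableSet
    rw [hindT, MeasureTheory.integral_indicator hTmeas]
    by_cases hx : Real.cosh x ≤ Real.cosh Λ
    · set t0 : ℝ := Real.arsinh (Real.sqrt (Real.cosh Λ ^ 2 - Real.cosh x ^ 2) / Real.cosh x)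
        with ht0def
      have hxpos := Real.cosh_pos x
      have hnn : 0 ≤ Real.cosh Λ ^ 2 - Real.cosh x ^ 2 := by
        nlinarith [Real.cosh_pos x, Real.cosh_pos Λ]
      have ht0nn : 0 ≤ t0 := by
        rw [ht0def, ← Real.arsinh_zero]
        exact Real.arsinh_le_arsinh.mpr (by positivity)
      have hcosh_t0 : Real.cosh t0 = Real.cosh Λ / Real.cosh x := by
        rw [ht0def, Real.cosh_arsinh]
        rw [div_pow, Real.sq_sqrt hnn]
        rw [show 1 + (Real.cosh Λ ^ 2 - Real.cosh x ^ 2) / Real.cosh x ^ 2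
            = (Real.cosh Λ / Real.cosh x) ^ 2 by field_simp; ring]
        exact Real.sqrt_sq (by positivity)
      have hsinh_t0 : Real.sinh t0
          = Real.sqrt (Real.cosh Λ ^ 2 - Real.cosh x ^ 2) / Real.cosh x := by
        rw [ht0def, Real.sinh_arsinh]
      have hTeq : T = Set.Icc 0 t0 := by
        ext y
        simp only [hT, Set.mem_setOf_eq, Set.mem_Icc]
        constructor
        · rintro ⟨hy, hle⟩
          refine ⟨hy, ?_⟩
          have h1 : Real.cosh y ≤ Real.cosh t0 := by
            rw [hcosh_t0, le_div_iff₀ hxpos]; linarith [mul_comm (Real.cosh x) (Real.cosh y)]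
          have := Real.cosh_le_cosh.mp h1
          rwa [abs_of_nonneg hy, abs_of_nonneg ht0nn] at this
        · rintro ⟨hy, hle⟩
          refine ⟨hy, ?_⟩
          have h1 : Real.cosh y ≤ Real.cosh t0 := by
            apply Real.cosh_le_cosh.mpr
            rwa [abs_of_nonneg hy, abs_of_nonneg ht0nn]
          rw [hcosh_t0, le_div_iff₀ hxpos] at h1
          linarith [mul_comm (Real.cosh y) (Real.cosh x)]
      rw [hTeq, MeasureTheory.integral_Icc_eq_integral_Ioc,
        ← intervalIntegral.integral_of_le ht0nn, intervalIntegral.integral_const_mul,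
        my_integral_cosh, Real.sinh_zero, sub_zero, hsinh_t0]
      field_simp
    · push_neg at hx
      have hTempty : T = ∅ := by
        ext y
        simp only [hT, Set.mem_setOf_eq, Set.mem_empty_iff_false, iff_false, not_and]
        intro _
        nlinarith [Real.one_le_cosh y, Real.cosh_pos x]
      rw [hTempty]
      simp only [Measure.restrict_empty, integral_zero_measure]
      rw [Real.sqrt_eq_zero'.mpr
        (by nlinarith [Real.cosh_pos Λ, Real.cosh_pos x] :
          Real.cosh Λ ^ 2 - Real.cosh x ^ 2 ≤ 0)]
      ring
  calc (∫ x : ℝ, ∫ y : ℝ, S.indicator f (x, y))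
      = ∫ x : ℝ, Real.cosh x * Real.sqrt (Real.cosh Λ ^ 2 - Real.cosh x ^ 2) := by
        exact integral_congr_ae (Filter.Eventually.of_forall inner)
    _ = ∫ x in Set.Ioc (-Λ) Λ,
          Real.cosh x * Real.sqrt (Real.cosh Λ ^ 2 - Real.cosh x ^ 2) := by
        symm
        apply MeasureTheory.setIntegral_eq_integral_of_forall_compl_eq_zero
        intro x hx
        have habs : Λ ≤ |x| := by
          simp only [Set.mem_Ioc, not_and_or, not_lt, not_le] at hx
          rcases hx with h | h
          · rw [abs_of_nonpos (by linarith)]; linarith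
          · rw [abs_of_nonneg (by linarith)]; linarith
        have : Real.cosh Λ ≤ Real.cosh x := by
          apply Real.cosh_le_cosh.mpr
          rwa [abs_of_nonneg hΛ]
        rw [Real.sqrt_eq_zero'.mpr
          (by nlinarith [Real.cosh_pos Λ, Real.cosh_pos x] :
            Real.cosh Λ ^ 2 - Real.cosh x ^ 2 ≤ 0)]
        ring
    _ = ∫ x in (-Λ)..Λ,
          Real.cosh x * Real.sqrt (Real.cosh Λ ^ 2 - Real.cosh x ^ 2) := by
        rw [intervalIntegral.integral_of_le (by linarith)]
    _ = ∫ x in (-Λ)..Λ,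
          Real.cosh x • ((fun u => Real.sqrt (Real.sinh Λ ^ 2 - u ^ 2)) ∘ Real.sinh) x := by
        apply intervalIntegral.integral_congr
        intro x _
        simp only [Function.comp_apply, smul_eq_mul]
        congr 2
        rw [Real.cosh_sq, Real.cosh_sq]
        ring
    _ = ∫ u in Real.sinh (-Λ)..Real.sinh Λ, Real.sqrt (Real.sinh Λ ^ 2 - u ^ 2) := by
        apply intervalIntegral.integral_comp_smul_deriv
        · intro x _; exact Real.hasDerivAt_sinh x
        · exact Real.continuous_cosh.continuousOn
        · exact Real.continuous_sqrt.comp (continuous_const.sub (continuous_pow 2))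
    _ = π * Real.sinh Λ ^ 2 / 2 := by
        rw [Real.sinh_neg]
        exact semicircle _ (by rw [← Real.sinh_zero]; exact Real.sinh_le_sinh.mpr hΛ)

/-- The renormalized volume in the Fuchsian case: with `Λ(ε) = −log ε`,
`V(ε) = A ∫_{−Λ}^{Λ} cosh²r dr + L ∬_{cosh r cosh t ≤ cosh Λ, t ≥ 0} cosh²r cosh t`,
one has `V(ε) − (A/4 + πL/8) ε⁻² + A log ε → −(π/4) L` as `ε → 0⁺`. -/
theorem stmt_9 (A L : ℝ) (hA : 0 < A) (hL : 0 ≤ L) :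
    Tendsto
      (fun ε : ℝ =>
        (A * ∫ r in (-(-Real.log ε))..(-Real.log ε), Real.cosh r ^ 2) +
          L * (∫ p in {p : ℝ × ℝ | 0 ≤ p.2 ∧
                  Real.cosh p.1 * Real.cosh p.2 ≤ Real.cosh (-Real.log ε)},
                Real.cosh p.1 ^ 2 * Real.cosh p.2) -
          (A / 4 + π * L / 8) * ε ^ (-2 : ℤ) + A * Real.log ε)
      (nhdsWithin 0 (Set.Ioi 0)) (nhds (-(π / 4) * L)) := by
  have hg : Tendsto (fun ε : ℝ => -(A * ε ^ 2) / 4 + π * L * (ε ^ 2 - 2) / 8)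
      (nhdsWithin 0 (Set.Ioi 0)) (nhds (-(π / 4) * L)) := by
    have hcont : Continuous (fun ε : ℝ => -(A * ε ^ 2) / 4 + π * L * (ε ^ 2 - 2) / 8) := by
      continuity
    have := tendsto_nhdsWithin_of_tendsto_nhds (s := Set.Ioi (0:ℝ)) (hcont.tendsto 0)
    convert this using 2
    ring
  apply hg.congr'
  filter_upwards [Ioo_mem_nhdsGT_of_mem
    (by norm_num : (0 : ℝ) ∈ Set.Ico (0 : ℝ) 1)] with ε hε
  obtain ⟨hε0, hε1⟩ := hε
  have hεne : ε ≠ 0 := ne_of_gt hε0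
  have hΛpos : 0 < -Real.log ε := by
    have := Real.log_neg hε0 hε1
    linarith
  have hcosh : Real.cosh (-Real.log ε) = (ε⁻¹ + ε) / 2 := by
    rw [Real.cosh_eq, Real.exp_neg, Real.exp_log hε0, neg_neg, Real.exp_log hε0]
  have hsinh : Real.sinh (-Real.log ε) = (ε⁻¹ - ε) / 2 := by
    rw [Real.sinh_eq, Real.exp_neg, Real.exp_log hε0, neg_neg, Real.exp_log hε0]
  rw [integral_cosh_sq, key_double _ (le_of_lt hΛpos), hsinh, hcosh]
  have hz : ε ^ (-2 : ℤ) = (ε ^ 2)⁻¹ := by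
    rw [zpow_neg, zpow_two, pow_two]
  rw [hz]
  field_simp
  all_goals ring_nf
end
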